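/- arXiv:2404.15767 — 6 statements merged into one kernel-verified Lean document; each statement's English description precedes it below -/
import Mathlib

section
/- Define H(b₁,b₃,t) = i(b₁²-b₃²)²/t + i t b₁ b₃/4 + 4a₂(b₁²-b₃²)/t - (1+i)a₃b₁ + (1-i)a₁b₃ for t ≠ 0. Then t·∂H/∂b₃ equals the right-hand side of 4t·b₁' = -16i b₁²b₃ + i t² b₁ + 16i b₃³ - 4i a₁ t + 4a₁ t - 32 a₂ b₃ divided by 4, and -t·∂H/∂b₁ equals the right-hand side of 4t·b₃' = -16i b₁³ + 16i b₁ b₃² - i t² b₃ + 4i a₃ t - 32 a₂ b₁ + 4 a₃ t divided by 4; i.e., the system is Hamiltonian: t b₁' = ∂H/∂b₃, t b₃' = -∂H/∂b₁. -/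
open Complex in
/-- The n = 4 Noumi–Yamada system (related to P₅) is Hamiltonian:
`t b₁' = ∂H/∂b₃`, `t b₃' = -∂H/∂b₁`. -/
theorem P5_hamiltonian (a1 a2 a3 t : ℂ) (ht : t ≠ 0)
    (H : ℂ → ℂ → ℂ)
    (hH : H = fun b1 b3 =>
      Complex.I * (b1 ^ 2 - b3 ^ 2) ^ 2 / t + Complex.I * t * b1 * b3 / 4
        + 4 * a2 * (b1 ^ 2 - b3 ^ 2) / t - (1 + Complex.I) * a3 * b1
        + (1 - Complex.I) * a1 * b3) :
    ∀ b1 b3 : ℂ,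
      HasDerivAt (fun x => H b1 x)
        ((-16 * Complex.I * b1 ^ 2 * b3 + t ^ 2 * b1 * Complex.I + 16 * Complex.I * b3 ^ 3
          - 4 * Complex.I * a1 * t + 4 * a1 * t - 32 * a2 * b3) / 4 / t) b3 ∧
      HasDerivAt (fun x => H x b3)
        (-((-16 * Complex.I * b1 ^ 3 + 16 * Complex.I * b1 * b3 ^ 2 - t ^ 2 * b3 * Complex.I
          + 4 * Complex.I * a3 * t - 32 * a2 * b1 + 4 * a3 * t) / 4 / t)) b1 := by
  subst hH
  intro b1 b3
  constructor
  · have h1 : HasDerivAt (fun x : ℂ => b1 ^ 2 - x ^ 2) (-(2 * b3 ^ 1)) b3 :=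
      (hasDerivAt_pow 2 b3).const_sub (b1 ^ 2)
    have h2 := ((((h1.pow 2).const_mul Complex.I).div_const t).add
        (((hasDerivAt_id b3).const_mul (Complex.I * t * b1)).div_const 4)).add
        (((h1.const_mul (4 * a2)).div_const t).sub_const ((1 + Complex.I) * a3 * b1))
    have h3 := h2.add ((hasDerivAt_id b3).const_mul ((1 - Complex.I) * a1))
    simp only [id_eq] at h3
    convert h3 using 1
    · rfl
    · rfl
    · funext x; simp only [Pi.add_apply, Pi.sub_apply, Pi.pow_apply]; ring
    · field_simp
      ring
  · have h1 : HasDerivAt (fun x : ℂ => x ^ 2 - b3 ^ 2) (2 * b1 ^ 1) b1 :=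
      (hasDerivAt_pow 2 b1).sub_const (b3 ^ 2)
    have h2 := ((((h1.pow 2).const_mul Complex.I).div_const t).add
        ((hasDerivAt_id b1).const_mul (Complex.I * t * b3) |>.div_const 4)).add
        (((h1.const_mul (4 * a2)).div_const t).sub ((hasDerivAt_id b1).const_mul ((1 + Complex.I) * a3)))
    have h3 := h2.add_const ((1 - Complex.I) * a1 * b3)
    simp only [id_eq] at h3
    convert h3 using 1
    · rfl
    · rfl
    · funext x; simp only [Pi.add_apply, Pi.sub_apply, Pi.pow_apply]; ring
    · field_simp
      ring
end

section
/- Suppose the 2×2 matrices satisfy [[0,-1],[1,0]]·U₅·V₄·U₃·V₂·U₁ = [[a,b],[c,d]] where Uⱼ = [[1,0],[xⱼ,1]] (lower unipotent) and Vⱼ = [[1,xⱼ],[0,1]] (upper unipotent), and ad - bc = 1. If x₁ = -c(x₃+x₅+x₃x₄x₅) - a(1+x₃x₄) and x₂ = d(1+x₄x₅) + b x₄, then necessarily d(x₃+x₅+x₃x₄x₅) + b(1+x₃x₄) + 1 = 0. -/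
open Matrix in
/-- The monodromy identity for the companion of P₁: after eliminating x₁, x₂ the fibre of
the monodromy map over [[a,b],[c,d]] ∈ SL₂(ℂ) is cut out by a cubic equation. -/
theorem companion_P1_cubic (a b c d x1 x2 x3 x4 x5 : ℂ)
    (hprod : (!![0, -1; 1, 0] : Matrix (Fin 2) (Fin 2) ℂ) * !![1, 0; x5, 1] *
        !![1, x4; 0, 1] * !![1, 0; x3, 1] * !![1, x2; 0, 1] * !![1, 0; x1, 1] =
      !![a, b; c, d])
    (hdet : a * d - b * c = 1)
    (hx1 : x1 = -c * (x3 + x5 + x3 * x4 * x5) - a * (1 + x3 * x4))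
    (hx2 : x2 = d * (1 + x4 * x5) + b * x4) :
    d * (x3 + x5 + x3 * x4 * x5) + b * (1 + x3 * x4) + 1 = 0 := by
  simp only [Matrix.mul_fin_two] at hprod
  have h01 := congrFun (congrFun hprod 0) 1
  have h11 := congrFun (congrFun hprod 1) 1
  simp only [Matrix.cons_val', Matrix.cons_val_zero, Matrix.cons_val_one, Matrix.head_cons,
    Matrix.head_fin_const, Matrix.empty_val', Matrix.cons_val_fin_one, Matrix.of_apply] at h01 h11
  linear_combination -(x3 + x5 + x3 * x4 * x5) * h11 - (1 + x3 * x4) * h01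
end

section
/- Suppose differentiable functions f₀, f₁, d₀, d₁ of t (t ranging over a domain avoiding 0) satisfy f₀f₁ = t, d₀ + d₁ = 0, t f₀'/f₀ = d₁ - d₀, t f₁'/f₁ = d₀ - d₁ + 1, t d₀' = f₁ - f₀, and t d₁' = f₀ - f₁, with f₀, f₁ nowhere zero. Then q := f₀ satisfies the Painlevé III(D₈) equation q'' = (q')²/q - q'/t + 2q²/t² - 2/t. -/
/-- The n = 2 case of the hierarchy z^{-1/n}, tz^{1/n}: the function `q := f₀` satisfies
the Painlevé III(D₈) equation `q'' = (q')²/q - q'/t + 2q²/t² - 2/t`. -/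
theorem P3D8_from_system (D : Set ℝ) (hD : IsOpen D) (h0 : (0 : ℝ) ∉ D)
    (f0 f1 d0 d1 f0' f1' d0' d1' f0'' : ℝ → ℂ)
    (hf0 : ∀ t ∈ D, HasDerivAt f0 (f0' t) t)
    (hf1 : ∀ t ∈ D, HasDerivAt f1 (f1' t) t)
    (hd0 : ∀ t ∈ D, HasDerivAt d0 (d0' t) t)
    (hd1 : ∀ t ∈ D, HasDerivAt d1 (d1' t) t)
    (hf0'' : ∀ t ∈ D, HasDerivAt f0' (f0'' t) t)
    (hf0ne : ∀ t ∈ D, f0 t ≠ 0)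
    (hf1ne : ∀ t ∈ D, f1 t ≠ 0)
    (hprod : ∀ t ∈ D, f0 t * f1 t = (t : ℂ))
    (hsum : ∀ t ∈ D, d0 t + d1 t = 0)
    (he0 : ∀ t ∈ D, (t : ℂ) * f0' t / f0 t = d1 t - d0 t)
    (he1 : ∀ t ∈ D, (t : ℂ) * f1' t / f1 t = d0 t - d1 t + 1)
    (he2 : ∀ t ∈ D, (t : ℂ) * d0' t = f1 t - f0 t)
    (he3 : ∀ t ∈ D, (t : ℂ) * d1' t = f0 t - f1 t) :
    ∀ t ∈ D, f0'' t =
      (f0' t) ^ 2 / f0 t - f0' t / (t : ℂ) + 2 * (f0 t) ^ 2 / (t : ℂ) ^ 2 - 2 / (t : ℂ) := by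
  intro t ht
  have htne : (t : ℂ) ≠ 0 := by
    simp only [ne_eq, Complex.ofReal_eq_zero]
    rintro rfl; exact h0 ht
  have hf0t := hf0ne t ht
  have key : ∀ s ∈ D, (s : ℂ) * f0' s = f0 s * (d1 s - d0 s) := by
    intro s hs
    have h := he0 s hs
    field_simp [hf0ne s hs] at h
    linear_combination h
  have hh : HasDerivAt (fun s : ℝ => (s : ℂ) * f0' s) (f0' t + (t:ℂ) * f0'' t) t := by
    have := (HasDerivAt.ofReal_comp (hasDerivAt_id t)).mul (hf0'' t ht)
    exact this.congr_deriv (by simp)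
  have hg : HasDerivAt (fun s : ℝ => f0 s * (d1 s - d0 s))
      (f0' t * (d1 t - d0 t) + f0 t * (d1' t - d0' t)) t :=
    (hf0 t ht).mul ((hd1 t ht).sub (hd0 t ht))
  have heq : (fun s : ℝ => (s : ℂ) * f0' s) =ᶠ[nhds t] (fun s : ℝ => f0 s * (d1 s - d0 s)) :=
    Filter.eventuallyEq_of_mem (hD.mem_nhds ht) key
  have E : f0' t + (t:ℂ) * f0'' t = f0' t * (d1 t - d0 t) + f0 t * (d1' t - d0' t) :=
    hh.unique (hg.congr_of_eventuallyEq heq)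
  have A := key t ht
  have B := he2 t ht
  have C := he3 t ht
  have P := hprod t ht
  have goal' : (t:ℂ)^2 * f0 t * f0'' t =
      (t:ℂ)^2 * (f0' t)^2 - (t:ℂ) * f0 t * f0' t + 2 * (f0 t)^3 - 2 * (t:ℂ) * f0 t := by
    linear_combination ((t:ℂ) * f0 t) * E + (-(t:ℂ) * f0' t) * A + (f0 t)^2 * (C - B) - 2 * f0 t * P
  have hden : (t:ℂ)^2 * f0 t ≠ 0 := mul_ne_zero (pow_ne_zero 2 htne) hf0t
  rw [eq_comm, ← sub_eq_zero]
  field_simp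
  linear_combination (-1 : ℂ) * goal'
end

section
/- If q is a twice-differentiable nowhere-vanishing solution of the P₃(D₈) equation q'' = (q')²/q - q'/t + 2q²/t² - 2/t on a domain avoiding 0, then the function t ↦ t/q(t) is also a solution of the same equation. -/
/-- If `q` is a nowhere-vanishing solution of P₃(D₈), then `t ↦ t/q(t)` is also a
solution of the same equation. -/
theorem P3D8_symmetry (D : Set ℝ) (hD : IsOpen D) (h0 : (0 : ℝ) ∉ D)
    (q q' q'' : ℝ → ℂ)
    (hq : ∀ t ∈ D, HasDerivAt q (q' t) t)
    (hq' : ∀ t ∈ D, HasDerivAt q' (q'' t) t)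
    (hne : ∀ t ∈ D, q t ≠ 0)
    (hode : ∀ t ∈ D, q'' t =
      (q' t) ^ 2 / q t - q' t / (t : ℂ) + 2 * (q t) ^ 2 / (t : ℂ) ^ 2 - 2 / (t : ℂ)) :
    ∀ t ∈ D,
      HasDerivAt (fun s : ℝ => (s : ℂ) / q s) ((q t - (t : ℂ) * q' t) / (q t) ^ 2) t ∧
      HasDerivAt (fun s : ℝ => (q s - (s : ℂ) * q' s) / (q s) ^ 2)
        (((q t - (t : ℂ) * q' t) / (q t) ^ 2) ^ 2 / ((t : ℂ) / q t)
          - ((q t - (t : ℂ) * q' t) / (q t) ^ 2) / (t : ℂ)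
          + 2 * ((t : ℂ) / q t) ^ 2 / (t : ℂ) ^ 2 - 2 / (t : ℂ)) t := by
  intro t ht
  have htr : t ≠ 0 := fun h => h0 (h ▸ ht)
  have ht0 : (t : ℂ) ≠ 0 := Complex.ofReal_ne_zero.mpr htr
  have hqt := hq t ht
  have hq't := hq' t ht
  have hqne := hne t ht
  have hid : HasDerivAt (fun s : ℝ => (s : ℂ)) 1 t := by
    simpa using (hasDerivAt_id t).ofReal_comp
  have h1 : HasDerivAt (fun s : ℝ => (s : ℂ) / q s)
      ((1 * q t - (t : ℂ) * q' t) / (q t) ^ 2) t := hid.div hqt hqne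
  refine ⟨by simpa using h1, ?_⟩
  have hnum : HasDerivAt (fun s : ℝ => q s - (s : ℂ) * q' s)
      (q' t - (1 * q' t + (t : ℂ) * q'' t)) t := hqt.sub (hid.mul hq't)
  have hden : HasDerivAt (fun s : ℝ => (q s) ^ 2) (2 * q t * q' t) t := by
    have h := hqt.mul hqt
    simp only [pow_two]
    convert h using 1
    · rfl
    · rfl
    ring
  have h2 := hnum.div hden (pow_ne_zero 2 hqne)
  convert h2 using 1
  · rfl
  · rfl
  rw [hode t ht]
  field_simp
  ring_nf
end

section
/- Suppose differentiable functions a₁, a₂, a₃, a₄ of t satisfy a₁' = -3a₁a₂a₃ + 3a₄, a₂' = -(3/2)a₁a₂² + 3a₂²a₃ - (9/2)a₂t - 3/2, a₃' = (3/2)a₃a₁a₂ - (3/2)a₄, a₄' = (3/2)a₄a₁a₂ - 3a₄a₂a₃ + (3/2)a₁a₃ + (9/2)a₄t. Then p₁ := a₁ + 2a₃ and p₂ := a₁ + a₃ + a₂a₄ are constants: p₁' = 0 and p₂' = 0. -/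
/-- For the Lax-pair system of the case z², -z²-tz, tz with z = 0 regular, the quantities
`p₁ := a₁ + 2a₃` and `p₂ := a₁ + a₃ + a₂a₄` are constants. -/
theorem invariants_nine (D : Set ℝ) (a1 a2 a3 a4 : ℝ → ℂ)
    (h1 : ∀ t ∈ D, HasDerivAt a1 (-3 * a1 t * a2 t * a3 t + 3 * a4 t) t)
    (h2 : ∀ t ∈ D, HasDerivAt a2
      (-(3 / 2) * a1 t * (a2 t) ^ 2 + 3 * (a2 t) ^ 2 * a3 t
        - 9 / 2 * a2 t * (t : ℂ) - 3 / 2) t)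
    (h3 : ∀ t ∈ D, HasDerivAt a3 (3 / 2 * a3 t * a1 t * a2 t - 3 / 2 * a4 t) t)
    (h4 : ∀ t ∈ D, HasDerivAt a4
      (3 / 2 * a4 t * a1 t * a2 t - 3 * a4 t * a2 t * a3 t
        + 3 / 2 * a1 t * a3 t + 9 / 2 * a4 t * (t : ℂ)) t) :
    ∀ t ∈ D,
      HasDerivAt (fun s => a1 s + 2 * a3 s) 0 t ∧
      HasDerivAt (fun s => a1 s + a3 s + a2 s * a4 s) 0 t := by
  intro t ht
  have H1 := h1 t ht
  have H2 := h2 t ht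
  have H3 := h3 t ht
  have H4 := h4 t ht
  constructor
  · have := H1.add ((H3.const_mul (2 : ℂ)))
    exact this.congr_deriv (by ring)
  · have := (H1.add H3).add (H2.mul H4)
    exact this.congr_deriv (by ring)
end

section
/- Suppose differentiable functions f₀, f₁, f₂, d₀, d₁, d₂ of t (on a domain avoiding 0) satisfy f₀f₁f₂ = t, d₀ + d₁ + d₂ = 0, t f₀'/f₀ = d₀ - d₂, t f₁'/f₁ = d₁ - d₀, t f₂'/f₂ = d₂ - d₁ + 1, t d₀' = f₁ - f₀, t d₁' = f₂ - f₁, t d₂' = f₀ - f₂, with f₀, f₁, f₂ nowhere zero. Then F := f₀ and G := f₁ satisfy F'' = (F')²/F - F'/t + (FG - 2F²)/t² + 1/(tG) and G'' = (G')²/G - G'/t + (FG - 2G²)/t² + 1/(tF). -/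
private lemma deriv_key (D : Set ℝ) (hD : IsOpen D) (h0 : (0 : ℝ) ∉ D)
    (f d g e : ℝ → ℂ)
    (hf : ∀ x ∈ D, HasDerivAt f (g x) x)
    (hd : ∀ x ∈ D, HasDerivAt d (e x) x)
    (heq : ∀ x ∈ D, (x : ℂ) * g x = f x * d x)
    (t : ℝ) (ht : t ∈ D) :
    HasDerivAt g ((g t * d t + f t * e t - g t) / (t : ℂ)) t := by
  have htR : (t : ℝ) ≠ 0 := fun h => h0 (h ▸ ht)
  have htne : (t : ℂ) ≠ 0 := Complex.ofReal_ne_zero.mpr htR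
  have hcast : HasDerivAt (fun x : ℝ => (x : ℂ)) 1 t := by
    simpa using (hasDerivAt_id t).ofReal_comp
  have hnum : HasDerivAt (fun x => f x * d x) (g t * d t + f t * e t) t :=
    (hf t ht).mul (hd t ht)
  have hdiv : HasDerivAt (fun x => f x * d x / (x : ℂ))
      (((g t * d t + f t * e t) * (t : ℂ) - f t * d t * 1) / ((t : ℂ)) ^ 2) t :=
    hnum.div hcast htne
  have hev : g =ᶠ[nhds t] fun x => f x * d x / (x : ℂ) := by
    filter_upwards [hD.mem_nhds ht] with x hx
    have hxne : (x : ℂ) ≠ 0 := Complex.ofReal_ne_zero.mpr (fun h => h0 (h ▸ hx))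
    rw [← heq x hx, mul_div_cancel_left₀ _ hxne]
  have := hdiv.congr_of_eventuallyEq hev
  refine this.congr_deriv ?_
  rw [← heq t ht]
  field_simp

/-- The n = 3 case of the hierarchy z^{-1/3}, tz^{1/3}: `F := f₀`, `G := f₁` satisfy a
coupled pair of second-order Painlevé-type equations. -/
theorem hierarchy_n3_system (D : Set ℝ) (hD : IsOpen D) (h0 : (0 : ℝ) ∉ D)
    (f0 f1 f2 d0 d1 d2 g0 g1 g2 e0 e1 e2 : ℝ → ℂ)
    (hf0 : ∀ t ∈ D, HasDerivAt f0 (g0 t) t)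
    (hf1 : ∀ t ∈ D, HasDerivAt f1 (g1 t) t)
    (hf2 : ∀ t ∈ D, HasDerivAt f2 (g2 t) t)
    (hd0 : ∀ t ∈ D, HasDerivAt d0 (e0 t) t)
    (hd1 : ∀ t ∈ D, HasDerivAt d1 (e1 t) t)
    (hd2 : ∀ t ∈ D, HasDerivAt d2 (e2 t) t)
    (hne0 : ∀ t ∈ D, f0 t ≠ 0) (hne1 : ∀ t ∈ D, f1 t ≠ 0) (hne2 : ∀ t ∈ D, f2 t ≠ 0)
    (hprod : ∀ t ∈ D, f0 t * f1 t * f2 t = (t : ℂ))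
    (hsum : ∀ t ∈ D, d0 t + d1 t + d2 t = 0)
    (r0 : ∀ t ∈ D, (t : ℂ) * g0 t / f0 t = d0 t - d2 t)
    (r1 : ∀ t ∈ D, (t : ℂ) * g1 t / f1 t = d1 t - d0 t)
    (r2 : ∀ t ∈ D, (t : ℂ) * g2 t / f2 t = d2 t - d1 t + 1)
    (s0 : ∀ t ∈ D, (t : ℂ) * e0 t = f1 t - f0 t)
    (s1 : ∀ t ∈ D, (t : ℂ) * e1 t = f2 t - f1 t)
    (s2 : ∀ t ∈ D, (t : ℂ) * e2 t = f0 t - f2 t) :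
    ∀ t ∈ D,
      HasDerivAt g0
        ((g0 t) ^ 2 / f0 t - g0 t / (t : ℂ)
          + (f0 t * f1 t - 2 * (f0 t) ^ 2) / (t : ℂ) ^ 2 + 1 / ((t : ℂ) * f1 t)) t ∧
      HasDerivAt g1
        ((g1 t) ^ 2 / f1 t - g1 t / (t : ℂ)
          + (f0 t * f1 t - 2 * (f1 t) ^ 2) / (t : ℂ) ^ 2 + 1 / ((t : ℂ) * f0 t)) t := by
  intro t ht
  have htR : (t : ℝ) ≠ 0 := fun h => h0 (h ▸ ht)
  have htne : (t : ℂ) ≠ 0 := Complex.ofReal_ne_zero.mpr htR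
  have heq0 : ∀ x ∈ D, (x : ℂ) * g0 x = f0 x * (d0 x - d2 x) := by
    intro x hx
    rw [← r0 x hx]
    field_simp [hne0 x hx]
  have heq1 : ∀ x ∈ D, (x : ℂ) * g1 x = f1 x * (d1 x - d0 x) := by
    intro x hx
    rw [← r1 x hx]
    field_simp [hne1 x hx]
  have k0 := deriv_key D hD h0 f0 (fun x => d0 x - d2 x) g0 (fun x => e0 x - e2 x)
    hf0 (fun x hx => (hd0 x hx).sub (hd2 x hx)) heq0 t ht
  have k1 := deriv_key D hD h0 f1 (fun x => d1 x - d0 x) g1 (fun x => e1 x - e0 x)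
    hf1 (fun x hx => (hd1 x hx).sub (hd0 x hx)) heq1 t ht
  constructor
  · convert k0 using 1
    show _ = (g0 t * (d0 t - d2 t) + f0 t * (e0 t - e2 t) - g0 t) / (t : ℂ)
    have hd : d0 t - d2 t = (t : ℂ) * g0 t / f0 t := (r0 t ht).symm
    have he : e0 t - e2 t = (f1 t - 2 * f0 t + f2 t) / (t : ℂ) := by
      rw [eq_div_iff htne]
      linear_combination (s0 t ht) - (s2 t ht)
    have hf2 : f2 t = (t : ℂ) / (f0 t * f1 t) := by
      rw [eq_div_iff (mul_ne_zero (hne0 t ht) (hne1 t ht))]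
      linear_combination hprod t ht
    rw [eq_div_iff htne, hd, he, hf2]
    field_simp [hne0 t ht, hne1 t ht, htne]
    ring
  · convert k1 using 1
    show _ = (g1 t * (d1 t - d0 t) + f1 t * (e1 t - e0 t) - g1 t) / (t : ℂ)
    have hd : d1 t - d0 t = (t : ℂ) * g1 t / f1 t := (r1 t ht).symm
    have he : e1 t - e0 t = (f2 t - 2 * f1 t + f0 t) / (t : ℂ) := by
      rw [eq_div_iff htne]
      linear_combination (s1 t ht) - (s0 t ht)
    have hf2 : f2 t = (t : ℂ) / (f0 t * f1 t) := by
      rw [eq_div_iff (mul_ne_zero (hne0 t ht) (hne1 t ht))]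
      linear_combination hprod t ht
    rw [eq_div_iff htne, hd, he, hf2]
    field_simp [hne0 t ht, hne1 t ht, htne]
    ring
end
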